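/- arXiv:2001.03598 — 4 statements merged into one kernel-verified Lean document; each statement's English description precedes it below -/
import Mathlib

section
/- Massey's bound: For any random variable X on a finite alphabet with Shannon entropy H(X) \geq 2 bits, the guesswork satisfies G(X) \geq \frac{1}{4} 2^{H(X)} + 1. -/
/-!
Fix a guessing order and write `p₀, p₁, …` for the probabilities in that order. Gibbs'
inequality against the geometric distribution `qₖ = Bᵏ / (B + 1)ᵏ⁺¹` bounds the entropy by
`μ log (B + 1) - (μ - 1) log B`, where `μ = ∑ (k + 1) pₖ` is the expected number of guesses.
Choosing `B = 2^(H - 2) ≥ 1` turns this into `2 log 2 ≤ μ (log (B + 1) - log B)`, while convexity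
of `x ↦ x log x` on `[1, 2]` gives `(B + 1) (log (B + 1) - log B) ≤ 2 log 2`; hence `B + 1 ≤ μ`.
-/

open Finset Real

lemma mul_log_le_mul_log_add_sub {p q : ℝ} (hp : 0 ≤ p) (hq : 0 < q) :
    p * log q ≤ p * log p + (q - p) := by
  rcases hp.eq_or_lt with rfl | hp
  · simpa using hq.le
  · have h := mul_le_mul_of_nonneg_left (log_le_sub_one_of_pos (div_pos hq hp)) hp.le
    rw [log_div hq.ne' hp.ne', mul_sub, mul_sub, mul_div_cancel₀ _ hp.ne', mul_one] at h
    linarith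

theorem sum_mul_log_le_sum_mul_log {ι : Type*} [Fintype ι] {p q : ι → ℝ}
    (hp : ∀ i, 0 ≤ p i) (hq : ∀ i, 0 < q i) (hqp : ∑ i, q i ≤ ∑ i, p i) :
    ∑ i, p i * log (q i) ≤ ∑ i, p i * log (p i) :=
  calc ∑ i, p i * log (q i)
      ≤ ∑ i, (p i * log (p i) + (q i - p i)) :=
        sum_le_sum fun i _ => mul_log_le_mul_log_add_sub (hp i) (hq i)
    _ = ∑ i, p i * log (p i) + (∑ i, q i - ∑ i, p i) := by
        rw [sum_add_distrib, sum_sub_distrib]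
    _ ≤ ∑ i, p i * log (p i) := by linarith

/-- The geometric distribution on `ℕ` with mean `B`. -/
noncomputable def geomWeight (B : ℝ) (k : ℕ) : ℝ := B ^ k / (B + 1) ^ (k + 1)

lemma geomWeight_pos {B : ℝ} (hB : 0 < B) (k : ℕ) : 0 < geomWeight B k := by
  unfold geomWeight; positivity

lemma sum_range_geomWeight_le_one {B : ℝ} (hB : 0 ≤ B) (n : ℕ) :
    ∑ k ∈ range n, geomWeight B k ≤ 1 := by
  have hB1 : 0 < B + 1 := by linarith
  have hr : B / (B + 1) < 1 := (div_lt_one hB1).2 (lt_add_one B)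
  calc ∑ k ∈ range n, geomWeight B k
      = (B + 1)⁻¹ * ∑ k ∈ Ico 0 n, (B / (B + 1)) ^ k := by
        rw [mul_sum, range_eq_Ico]
        refine sum_congr rfl fun k _ => ?_
        rw [geomWeight, div_pow, pow_succ]
        field_simp
    _ ≤ (B + 1)⁻¹ * ((B / (B + 1)) ^ 0 / (1 - B / (B + 1))) := by
        gcongr
        exact geom_sum_Ico_le_of_lt_one (by positivity) hr
    _ = 1 := by field_simp; ring

lemma neg_log_geomWeight {B : ℝ} (hB : 0 < B) (k : ℕ) :
    -log (geomWeight B k) = (k + 1) * log (B + 1) - k * log B := by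
  rw [geomWeight, log_div (by positivity) (by positivity), log_pow, log_pow]
  push_cast
  ring

def guessCost {n : ℕ} (p : Fin n → ℝ) : ℝ := ∑ k : Fin n, (((k : ℕ) : ℝ) + 1) * p k

theorem neg_sum_mul_log_le_guessCost {n : ℕ} {p : Fin n → ℝ} (hp0 : ∀ k, 0 ≤ p k)
    (hp1 : ∑ k, p k = 1) {B : ℝ} (hB : 0 < B) :
    -∑ k, p k * log (p k) ≤ guessCost p * log (B + 1) - (guessCost p - 1) * log B := by
  have hq : ∑ k : Fin n, geomWeight B k ≤ ∑ k, p k := by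
    rw [hp1, Fin.sum_univ_eq_sum_range (geomWeight B)]
    exact sum_range_geomWeight_le_one hB.le n
  have hgibbs := sum_mul_log_le_sum_mul_log hp0 (fun k => geomWeight_pos hB k) hq
  calc -∑ k, p k * log (p k)
      ≤ ∑ k, p k * -log (geomWeight B k) := by simp only [mul_neg, sum_neg_distrib]; linarith
    _ = ∑ k : Fin n, ((((k : ℕ) : ℝ) + 1) * p k * log (B + 1)
          - ((((k : ℕ) : ℝ) + 1) * p k - p k) * log B) := by
        refine sum_congr rfl fun k _ => ?_
        rw [neg_log_geomWeight hB]
        ring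
    _ = guessCost p * log (B + 1) - (guessCost p - 1) * log B := by
        rw [sum_sub_distrib, ← sum_mul, ← sum_mul, sum_sub_distrib, hp1, guessCost]

lemma one_add_mul_log_one_add_le {u : ℝ} (hu0 : 0 ≤ u) (hu1 : u ≤ 1) :
    (1 + u) * log (1 + u) ≤ u * (2 * log 2) := by
  have h := convexOn_mul_log.2 (Set.mem_Ici.2 zero_le_one) (Set.mem_Ici.2 zero_le_two)
    (sub_nonneg.2 hu1) hu0 (sub_add_cancel 1 u)
  rw [show (1 - u) • (1 : ℝ) + u • 2 = 1 + u by simp only [smul_eq_mul]; ring] at h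
  simpa only [smul_eq_mul, log_one, mul_zero, zero_add, mul_zero] using h

lemma add_one_mul_log_sub_log_le {B : ℝ} (hB : 1 ≤ B) :
    (B + 1) * (log (B + 1) - log B) ≤ 2 * log 2 := by
  have hB0 : 0 < B := by linarith
  have hu : B⁻¹ ≤ 1 := inv_le_one_of_one_le₀ hB
  have h := mul_le_mul_of_nonneg_left (one_add_mul_log_one_add_le (inv_nonneg.2 hB0.le) hu) hB0.le
  have hx : 1 + B⁻¹ = (B + 1) / B := by field_simp
  rwa [hx, log_div (by positivity) hB0.ne', ← mul_assoc, ← mul_assoc, mul_div_cancel₀ _ hB0.ne',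
    mul_inv_cancel₀ hB0.ne', one_mul] at h

theorem two_rpow_sub_two_add_one_le_guessCost {n : ℕ} {p : Fin n → ℝ} (hp0 : ∀ k, 0 ≤ p k)
    (hp1 : ∑ k, p k = 1) {H : ℝ} (hH : H = -∑ k, p k * logb 2 (p k)) (hH2 : 2 ≤ H) :
    (2 : ℝ) ^ (H - 2) + 1 ≤ guessCost p := by
  set B : ℝ := 2 ^ (H - 2)
  have hB : 1 ≤ B := one_le_rpow one_le_two (by linarith)
  have hB0 : 0 < B := by linarith
  have hlogB : log B = H * log 2 - 2 * log 2 := by rw [log_rpow two_pos]; ring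
  have hentropy : H * log 2 = -∑ k, p k * log (p k) := by
    simp only [hH, logb, neg_mul, sum_mul, mul_div_assoc']
    field_simp
  have hd : 0 < log (B + 1) - log B := sub_pos.2 (log_lt_log hB0 (lt_add_one B))
  have hupper := add_one_mul_log_sub_log_le hB
  have hlower : 2 * log 2 ≤ guessCost p * (log (B + 1) - log B) := by
    have := neg_sum_mul_log_le_guessCost hp0 hp1 hB0
    rw [← hentropy] at this
    linarith
  exact le_of_mul_le_mul_right (hupper.trans hlower) hd

open Fintype in
theorem massey_bound_general {X : Type*} [Fintype X]
    (p : X → ℝ) (hp0 : ∀ x, 0 ≤ p x) (hp1 : ∑ x, p x = 1)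
    (H : ℝ) (hH : H = -∑ x, p x * Real.logb 2 (p x)) (hH2 : 2 ≤ H) :
    (1 / 4) * (2 : ℝ) ^ H + 1 ≤
      ⨅ σ : Fin (card X) ≃ X, ∑ k : Fin (card X), (((k : ℕ) : ℝ) + 1) * p (σ k) := by
  have : Nonempty (Fin (card X) ≃ X) := ⟨(equivFin X).symm⟩
  refine le_ciInf fun σ => ?_
  have hquarter : (1 / 4) * (2 : ℝ) ^ H = 2 ^ (H - 2) := by
    rw [rpow_sub two_pos]; norm_num; ring
  rw [hquarter]
  refine two_rpow_sub_two_add_one_le_guessCost (fun k => hp0 (σ k)) ?_ ?_ hH2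
  · rw [Equiv.sum_comp σ p, hp1]
  · rw [hH, Equiv.sum_comp σ fun x => p x * logb 2 (p x)]

open Fintype in
/-- Massey's bound: if the Shannon entropy `H(X)` (in bits) is at least 2, then the
guesswork satisfies `G(X) ≥ (1/4)·2^{H(X)} + 1`. -/
theorem massey_bound {X : Type*} [Fintype X] [Nonempty X]
    (p : X → ℝ) (hp0 : ∀ x, 0 ≤ p x) (hp1 : ∑ x, p x = 1)
    (H : ℝ) (hH : H = -∑ x, p x * Real.logb 2 (p x)) (hH2 : 2 ≤ H) :
    (1 / 4) * (2 : ℝ) ^ H + 1 ≤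
      ⨅ σ : Fin (card X) ≃ X, ∑ k : Fin (card X), (((k : ℕ) : ℝ) + 1) * p (σ k) :=
  massey_bound_general p hp0 hp1 H hH hH2
end

section
/- Pliam's inequality: for any random variable X on a finite alphabet \mathcal{X}, \frac{|\mathcal{X}|+1}{2} - G(X) \leq \frac{1}{2} |\mathcal{X}| \cdot \|p_X - u_X\|_1, where u_X is the uniform distribution on \mathcal{X} and \|\cdot\|_1 denotes the total (unnormalized) \ell_1 distance. -/
open Fintype in
/-- Pliam's inequality: `(|X|+1)/2 − G(X) ≤ (1/2)|X|·‖p − u‖₁`, where `u` is the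
uniform distribution and `G(X)` is the guesswork (minimum over guessing orders of the
expected number of guesses). -/
theorem pliam_inequality {X : Type*} [Fintype X] [Nonempty X]
    (p : X → ℝ) (hp0 : ∀ x, 0 ≤ p x) (hp1 : ∑ x, p x = 1) :
    ((card X : ℝ) + 1) / 2 -
        (⨅ σ : Fin (card X) ≃ X, ∑ k : Fin (card X), (((k : ℕ) : ℝ) + 1) * p (σ k)) ≤
      (1 / 2) * (card X : ℝ) * ∑ x, |p x - 1 / (card X : ℝ)| := by
  have hcard : 0 < card X := Fintype.card_pos
  set n := card X with hn
  have hn1 : 1 ≤ (n : ℝ) := by exact_mod_cast hcard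
  have hnne : (n : ℝ) ≠ 0 := by positivity
  haveI : Nonempty (Fin n ≃ X) := ⟨(Fintype.equivFin X).symm⟩
  rw [sub_le_iff_le_add, ← sub_le_iff_le_add']
  refine le_ciInf fun σ => ?_
  have h1 : ∑ k : Fin n, p (σ k) = 1 := (Equiv.sum_comp σ p).trans hp1
  have hgauss : ∀ m : ℕ, ∑ i ∈ Finset.range m, ((i : ℝ) + 1) = m * (m + 1) / 2 := by
    intro m
    induction m with
    | zero => simp
    | succ m ih => rw [Finset.sum_range_succ, ih]; push_cast; ring
  have h2 : ∑ k : Fin n, (((k : ℕ) : ℝ) + 1) = (n : ℝ) * ((n : ℝ) + 1) / 2 := by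
    rw [Fin.sum_univ_eq_sum_range (fun i => ((i : ℝ) + 1)) n, hgauss]
  have key : ((n : ℝ) + 1) / 2 - ∑ k : Fin n, (((k : ℕ) : ℝ) + 1) * p (σ k)
      = ∑ k : Fin n, (((n : ℝ) + 1) / 2 - (((k : ℕ) : ℝ) + 1)) * (p (σ k) - 1 / (n : ℝ)) := by
    simp only [sub_mul, mul_sub, Finset.sum_sub_distrib, ← Finset.mul_sum, ← Finset.sum_mul,
      Finset.sum_const, Finset.card_univ, Fintype.card_fin, nsmul_eq_mul]
    rw [h1, h2]
    field_simp
    ring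
  have hcoef : ∀ k : Fin n, |((n : ℝ) + 1) / 2 - (((k : ℕ) : ℝ) + 1)| ≤ (n : ℝ) / 2 := by
    intro k
    have hk : ((k : ℕ) : ℝ) + 1 ≤ (n : ℝ) := by exact_mod_cast k.isLt
    have hk0 : (0 : ℝ) ≤ ((k : ℕ) : ℝ) := Nat.cast_nonneg _
    rw [abs_le]
    constructor <;> linarith
  have main : ((n : ℝ) + 1) / 2 - ∑ k : Fin n, (((k : ℕ) : ℝ) + 1) * p (σ k)
      ≤ (n : ℝ) / 2 * ∑ x, |p x - 1 / (n : ℝ)| := by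
    rw [key]
    calc ∑ k : Fin n, (((n : ℝ) + 1) / 2 - (((k : ℕ) : ℝ) + 1)) * (p (σ k) - 1 / (n : ℝ))
        ≤ ∑ k : Fin n, |(((n : ℝ) + 1) / 2 - (((k : ℕ) : ℝ) + 1)) * (p (σ k) - 1 / (n : ℝ))| :=
          Finset.sum_le_sum fun k _ => le_abs_self _
      _ ≤ ∑ k : Fin n, (n : ℝ) / 2 * |p (σ k) - 1 / (n : ℝ)| := by
          refine Finset.sum_le_sum fun k _ => ?_
          rw [abs_mul]
          exact mul_le_mul_of_nonneg_right (hcoef k) (abs_nonneg _)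
      _ = (n : ℝ) / 2 * ∑ k : Fin n, |p (σ k) - 1 / (n : ℝ)| := by rw [Finset.mul_sum]
      _ = (n : ℝ) / 2 * ∑ x, |p x - 1 / (n : ℝ)| := by
          rw [Equiv.sum_comp σ (fun x => |p x - 1 / (n : ℝ)|)]
  linarith
end

section
/- Entropy lower-bounds guesswork with side information in the sense of imperfect keys: if a joint distribution p_{KY} on \mathcal{K} \times \mathcal{Y} satisfies \frac{1}{2}\|p_{KY} - u_K \otimes p_Y\|_1 \leq \varepsilon, then G(K|Y) \geq \frac{|\mathcal{K}|+1}{2} - |\mathcal{K}| \varepsilon. -/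
/-!
For a guessing order `σ` and `q k = p (σ k) y`, the cost `∑ (k + 1) q k` equals
`(n + 1) / 2 · p_Y(y) + ∑ (k + 1 - (n + 1) / 2) (q k - p_Y(y) / n)`, because the deviations
`q k - p_Y(y) / n` from the uniform value sum to zero. Every weight `k + 1 - (n + 1) / 2` has
absolute value at most `n / 2`, so the correction is at least `-n / 2` times the ℓ₁ distance of
`p(·, y)` from `u_K · p_Y(y)`. Summing over `y` gives
`G(K|Y) ≥ (n + 1) / 2 - n / 2 · ‖p_{KY} - u_K ⊗ p_Y‖₁`.
-/

open Finset Fintype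

/-- For `f = p(·, y)` this is `p_Y(y)` times the conditional guesswork given `Y = y`; guesses are
indexed from `0`, so the `k`-th one costs `k + 1`. -/
noncomputable def guesswork {K : Type*} [Fintype K] (f : K → ℝ) : ℝ :=
  ⨅ σ : Fin (card K) ≃ K, ∑ k : Fin (card K), (((k : ℕ) : ℝ) + 1) * f (σ k)

theorem neg_mul_sum_abs_le_sum_mul_of_sum_eq_zero {ι : Type*} [Fintype ι] {w d : ι → ℝ}
    {c M : ℝ} (hd : ∑ i, d i = 0) (hw : ∀ i, |w i - c| ≤ M) :
    -(M * ∑ i, |d i|) ≤ ∑ i, w i * d i := by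
  have hcenter : ∑ i, w i * d i = ∑ i, (w i - c) * d i := by
    simp only [sub_mul, sum_sub_distrib, ← mul_sum, hd, mul_zero, sub_zero]
  rw [hcenter, mul_sum, ← sum_neg_distrib]
  refine sum_le_sum fun i _ => ?_
  calc -(M * |d i|) ≤ -|(w i - c) * d i| := by
        rw [abs_mul]; exact neg_le_neg (mul_le_mul_of_nonneg_right (hw i) (abs_nonneg _))
    _ ≤ (w i - c) * d i := neg_abs_le _

theorem sum_fin_natCast_add_one (n : ℕ) :
    ∑ k : Fin n, (((k : ℕ) : ℝ) + 1) = n * (n + 1) / 2 := by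
  induction n with
  | zero => simp
  | succ n ih =>
    simp only [Fin.sum_univ_castSucc, Fin.val_castSucc, Fin.val_last, ih]
    push_cast; ring

theorem sum_sub_mean_eq_zero {ι : Type*} [Fintype ι] (q : ι → ℝ) :
    ∑ i, (q i - (∑ j, q j) / card ι) = 0 := by
  rw [sum_sub_distrib, sum_const, card_univ, nsmul_eq_mul, mul_comm,
    div_mul_cancel_of_imp fun h => by simp [card_eq_zero_iff.mp (by exact_mod_cast h)], sub_self]

theorem le_sum_natCast_add_one_mul {n : ℕ} (q : Fin n → ℝ) :
    (n + 1) / 2 * ∑ k, q k - n / 2 * ∑ k, |q k - (∑ j, q j) / n|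
      ≤ ∑ k : Fin n, (((k : ℕ) : ℝ) + 1) * q k := by
  set m := (∑ j, q j) / n
  have hmean : ∑ k : Fin n, (q k - m) = 0 := by simpa using sum_sub_mean_eq_zero q
  have hweight : ∀ k : Fin n, |(((k : ℕ) : ℝ) + 1) - (n + 1) / 2| ≤ n / 2 := by
    intro k
    have hk : ((k : ℕ) : ℝ) + 1 ≤ n := by exact_mod_cast k.isLt
    rw [abs_le]; constructor <;> linarith [Nat.cast_nonneg (α := ℝ) (k : ℕ)]
  have hsplit : ∑ k : Fin n, (((k : ℕ) : ℝ) + 1) * q k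
      = ∑ k : Fin n, (((k : ℕ) : ℝ) + 1) * (q k - m) + (n + 1) / 2 * ∑ k, q k := by
    have hsum : m * n = ∑ k, q k := div_mul_cancel_of_imp fun h => by
      obtain rfl : n = 0 := by exact_mod_cast h
      simp
    simp only [mul_sub, sum_sub_distrib, ← sum_mul, sum_fin_natCast_add_one]
    linear_combination (n + 1) / 2 * hsum
  rw [hsplit]
  linarith [neg_mul_sum_abs_le_sum_mul_of_sum_eq_zero hmean hweight]

section Guesswork

variable {K : Type*} [Fintype K]

theorem le_guesswork (f : K → ℝ) :
    (card K + 1) / 2 * ∑ k, f k - card K / 2 * ∑ k, |f k - (∑ j, f j) / card K|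
      ≤ guesswork f := by
  have : Nonempty (Fin (card K) ≃ K) := ⟨(equivFin K).symm⟩
  refine le_ciInf fun σ => ?_
  have h := le_sum_natCast_add_one_mul (f ∘ σ)
  simp only [Function.comp_apply, Equiv.sum_comp σ f] at h
  rwa [Equiv.sum_comp σ fun k => |f k - (∑ j, f j) / card K|] at h

theorem guesswork_nonneg {f : K → ℝ} (hf : 0 ≤ f) : 0 ≤ guesswork f := by
  have : Nonempty (Fin (card K) ≃ K) := ⟨(equivFin K).symm⟩
  exact le_ciInf fun σ => sum_nonneg fun k _ => mul_nonneg (by positivity) (hf _)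

theorem guesswork_le {f : K → ℝ} (hf : 0 ≤ f) : guesswork f ≤ card K * ∑ k, f k := by
  let σ := (equivFin K).symm
  calc guesswork f ≤ ∑ k : Fin (card K), (((k : ℕ) : ℝ) + 1) * f (σ k) :=
        ciInf_le (Set.finite_range _).bddBelow σ
    _ ≤ ∑ k : Fin (card K), (card K : ℝ) * f (σ k) := by
        refine sum_le_sum fun k _ => mul_le_mul_of_nonneg_right ?_ (hf _)
        exact_mod_cast k.isLt
    _ = card K * ∑ k, f k := by rw [← mul_sum, Equiv.sum_comp σ f]

end Guesswork

theorem HasSum.sum_fst_of_fintype {α K Y : Type*} [AddCommMonoid α] [TopologicalSpace α]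
    [ContinuousAdd α] [RegularSpace α] [Fintype K] {f : K × Y → α} {a : α} (h : HasSum f a) :
    HasSum (fun y => ∑ k, f (k, y)) a :=
  ((Equiv.prodComm Y K).hasSum_iff.2 h).prod_fiberwise fun _ => hasSum_fintype _

theorem summable_abs_sub_sum_div_card {K Y : Type*} [Fintype K] {p : K → Y → ℝ}
    (hp0 : ∀ k y, 0 ≤ p k y) (hp : Summable fun ky : K × Y => p ky.1 ky.2) :
    Summable fun ky : K × Y => |p ky.1 ky.2 - (∑ k', p k' ky.2) / card K| := by
  set s : Y → ℝ := fun y => ∑ k', p k' y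
  have hs0 : ∀ y, 0 ≤ s y / card K := fun y =>
    div_nonneg (sum_nonneg fun k _ => hp0 k y) (by positivity)
  have hs : Summable fun ky : K × Y => 1 * (s ky.2 / card K) :=
    Summable.of_finite.mul_of_nonneg (hp.hasSum.sum_fst_of_fintype.summable.div_const _)
      (fun _ => zero_le_one) hs0
  refine Summable.of_nonneg_of_le (fun _ => abs_nonneg _) (fun ky => ?_) (hp.add hs)
  calc |p ky.1 ky.2 - s ky.2 / card K| ≤ |p ky.1 ky.2| + |s ky.2 / card K| := abs_sub _ _
    _ = p ky.1 ky.2 + 1 * (s ky.2 / card K) := by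
        rw [abs_of_nonneg (hp0 _ _), abs_of_nonneg (hs0 _), one_mul]

open Fintype in
theorem guesswork_imperfect_key_general {K Y : Type*} [Fintype K]
    (p : K → Y → ℝ) (hp0 : ∀ k y, 0 ≤ p k y)
    (hp1 : HasSum (fun ky : K × Y => p ky.1 ky.2) 1)
    (ε : ℝ)
    (hε : (1 / 2) *
        ∑' ky : K × Y, |p ky.1 ky.2 - (∑ k' : K, p k' ky.2) / (card K : ℝ)| ≤ ε) :
    ((card K : ℝ) + 1) / 2 - (card K : ℝ) * ε ≤
      ∑' y : Y, ⨅ σ : Fin (card K) ≃ K,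
        ∑ k : Fin (card K), (((k : ℕ) : ℝ) + 1) * p (σ k) y := by
  change _ ≤ ∑' y, guesswork (p · y)
  set n : ℝ := card K
  set s : Y → ℝ := fun y => ∑ k, p k y
  set t : Y → ℝ := fun y => ∑ k, |p k y - s y / n|
  have hs : HasSum s 1 := hp1.sum_fst_of_fintype
  have ht : HasSum t (∑' ky : K × Y, |p ky.1 ky.2 - s ky.2 / n|) :=
    (summable_abs_sub_sum_div_card hp0 hp1.summable).hasSum.sum_fst_of_fintype
  have hbound := (hs.mul_left ((n + 1) / 2)).sub (ht.mul_left (n / 2))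
  have hG : Summable fun y => guesswork (p · y) :=
    .of_nonneg_of_le (fun y => guesswork_nonneg (hp0 · y)) (fun y => guesswork_le (hp0 · y))
      (hs.summable.mul_left n)
  calc (n + 1) / 2 - n * ε
      ≤ (n + 1) / 2 * 1 - n / 2 * ∑' ky : K × Y, |p ky.1 ky.2 - s ky.2 / n| := by
        nlinarith [(by positivity : (0 : ℝ) ≤ n)]
    _ = ∑' y, ((n + 1) / 2 * s y - n / 2 * t y) := hbound.tsum_eq.symm
    _ ≤ ∑' y, guesswork (p · y) := hbound.summable.tsum_le_tsum (fun y => le_guesswork _) hG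

open Fintype in
/-- Guesswork security of an imperfect key: if the joint distribution `p` on `K × Y` is
`ε`-close in normalized ℓ₁ distance to `u_K ⊗ p_Y`, then
`G(K|Y) ≥ (|K|+1)/2 − |K|·ε`. -/
theorem guesswork_imperfect_key {K Y : Type*} [Fintype K] [Nonempty K] [Countable Y]
    (p : K → Y → ℝ) (hp0 : ∀ k y, 0 ≤ p k y)
    (hp1 : HasSum (fun ky : K × Y => p ky.1 ky.2) 1)
    (ε : ℝ)
    (hε : (1 / 2) *
        ∑' ky : K × Y, |p ky.1 ky.2 - (∑ k' : K, p k' ky.2) / (card K : ℝ)| ≤ ε) :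
    ((card K : ℝ) + 1) / 2 - (card K : ℝ) * ε ≤
      ∑' y : Y, ⨅ σ : Fin (card K) ≃ K,
        ∑ k : Fin (card K), (((k : ℕ) : ℝ) + 1) * p (σ k) y :=
  guesswork_imperfect_key_general p hp0 hp1 ε hε
end

section
/- Upper bound on guesswork for BB84 states: for the uniform ensemble of the four BB84 qubit states \{|0\rangle, |1\rangle, |+\rangle, |-\rangle\}, the guesswork with quantum side information satisfies G(X|B) \leq \frac{1}{4}(10 - \sqrt{10}), achieved by a projective measurement \{|\theta\rangle\langle\theta|, |\theta^\perp\rangle\langle\theta^\perp|\} with \theta = \frac{1}{2}\arctan(1/3) and |\theta\rangle = \sin\theta |0\rangle + \cos\theta |1\rangle, using guessing orders (1,+,-,0) and (0,-,+,1) respectively. Concretely, for this measurement and these guessing orders the expected number of guesses equals 1.75 + \frac{3}{2}\sin^2\theta - \frac{1}{4}\sin 2\theta, whose minimum over \theta is \frac{1}{4}(10-\sqrt{10}). -/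
/-!
The expected number of guesses of any POVM indexed by guessing orders bounds the guesswork
from above; the infimum is bounded below by `0` because `tr (R E) ≥ 0` for positive
semidefinite `R` and `E`. For the projective
measurement `{|θ⟩⟨θ|, |θ^⊥⟩⟨θ^⊥|}` with the orders `(1,+,−,0)` and `(0,−,+,1)` the expected
number of guesses is `5/2 − (3 cos 2θ + sin 2θ)/4`, and `3 cos 2θ + sin 2θ` attains its
maximum `√10` where `tan 2θ = 1/3`.
-/

open Matrix ComplexOrder

/-- The four BB84 states `|0⟩, |1⟩, |+⟩, |−⟩` as vectors in `ℂ²`. -/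
noncomputable def bb84 : Fin 4 → Fin 2 → ℂ :=
  ![![1, 0], ![0, 1],
    ![((Real.sqrt 2 : ℝ) : ℂ)⁻¹, ((Real.sqrt 2 : ℝ) : ℂ)⁻¹],
    ![((Real.sqrt 2 : ℝ) : ℂ)⁻¹, -((Real.sqrt 2 : ℝ) : ℂ)⁻¹]]

/-- The rank-one projector `|ψ_k⟩⟨ψ_k|` onto the `k`-th BB84 state. -/
noncomputable def bb84Proj (k : Fin 4) : Matrix (Fin 2) (Fin 2) ℂ :=
  Matrix.vecMulVec (bb84 k) (star (bb84 k))

/-- The cost operator `R_g = (1/4) ∑_k N(g,k) |ψ_k⟩⟨ψ_k|`, where `N(g,k) = g⁻¹(k)+1`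
is the position of `k` in the guessing order `g`. -/
noncomputable def bb84R (g : Equiv.Perm (Fin 4)) : Matrix (Fin 2) (Fin 2) ℂ :=
  (4 : ℂ)⁻¹ • ∑ k : Fin 4, ((((g.symm k : ℕ) + 1 : ℕ) : ℂ)) • bb84Proj k

/-- The guesswork with quantum side information for the uniform BB84 ensemble:
infimum over POVMs indexed by guessing orders of the expected number of guesses. -/
noncomputable def bb84Guesswork : ℝ :=
  ⨅ E : {E : Equiv.Perm (Fin 4) → Matrix (Fin 2) (Fin 2) ℂ //
      (∀ g, (E g).PosSemidef) ∧ ∑ g, E g = 1},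
    (∑ g : Equiv.Perm (Fin 4), (bb84R g * E.1 g).trace).re

/-- The guessing order `(1,+,−,0)`, used for the outcome `|θ⟩⟨θ|`. -/
def bb84OrderA : Equiv.Perm (Fin 4) := ⟨![1, 2, 3, 0], ![3, 0, 1, 2], by decide, by decide⟩

/-- The guessing order `(0,−,+,1)`, used for the outcome `|θ^⊥⟩⟨θ^⊥|`. -/
def bb84OrderB : Equiv.Perm (Fin 4) := ⟨![0, 3, 2, 1], ![0, 3, 2, 1], by decide, by decide⟩

/-- The measurement vector `|θ⟩ = sin θ |0⟩ + cos θ |1⟩`. -/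
noncomputable def thetaVec (θ : ℝ) : Fin 2 → ℂ := ![(Real.sin θ : ℂ), (Real.cos θ : ℂ)]

/-- The orthogonal vector `|θ^⊥⟩ = cos θ |0⟩ − sin θ |1⟩`. -/
noncomputable def thetaVecPerp (θ : ℝ) : Fin 2 → ℂ := ![(Real.cos θ : ℂ), -(Real.sin θ : ℂ)]
theorem Matrix.PosSemidef.trace_mul_nonneg {n 𝕜 : Type*} [Fintype n] [DecidableEq n]
    [RCLike 𝕜] {A B : Matrix n n 𝕜} (hA : A.PosSemidef) (hB : B.PosSemidef) :
    0 ≤ (A * B).trace := by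
  obtain ⟨C, rfl⟩ : ∃ C : Matrix n n 𝕜, B = Cᴴ * C := by
    open scoped MatrixOrder in exact CStarAlgebra.nonneg_iff_eq_star_mul_self.mp hB.nonneg
  rw [← mul_assoc, trace_mul_comm, ← mul_assoc]
  exact (hA.mul_mul_conjTranspose_same C).trace_nonneg

theorem Real.mul_cos_arctan_add_mul_sin_arctan {a : ℝ} (ha : 0 < a) (b : ℝ) :
    a * Real.cos (Real.arctan (b / a)) + b * Real.sin (Real.arctan (b / a)) =
      Real.sqrt (a ^ 2 + b ^ 2) := by
  have hs : Real.sqrt (1 + (b / a) ^ 2) = Real.sqrt (a ^ 2 + b ^ 2) / a := by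
    rw [div_pow, one_add_div (by positivity), Real.sqrt_div' _ (sq_nonneg a),
      Real.sqrt_sq ha.le]
  rw [Real.cos_arctan, Real.sin_arctan, hs]
  field_simp
  rw [Real.sq_sqrt (by positivity)]

theorem Complex.ofReal_sqrt_two_inv_mul_self :
    ((Real.sqrt 2 : ℝ) : ℂ)⁻¹ * ((Real.sqrt 2 : ℝ) : ℂ)⁻¹ = 2⁻¹ := by
  rw [← mul_inv, ← Complex.ofReal_mul, Real.mul_self_sqrt zero_le_two, Complex.ofReal_ofNat]

theorem Complex.ofReal_sin_sq_add_ofReal_cos_sq (θ : ℝ) :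
    (Real.sin θ : ℂ) ^ 2 + (Real.cos θ : ℂ) ^ 2 = 1 := by
  exact_mod_cast Real.sin_sq_add_cos_sq θ

theorem bb84R_posSemidef (g : Equiv.Perm (Fin 4)) : (bb84R g).PosSemidef :=
  .smul (posSemidef_sum _ fun k _ =>
    (posSemidef_vecMulVec_self_star (bb84 k)).smul (Nat.cast_nonneg _))
    (by norm_num [Complex.nonneg_iff])

theorem bb84Guesswork_le {E : Equiv.Perm (Fin 4) → Matrix (Fin 2) (Fin 2) ℂ}
    (hE : ∀ g, (E g).PosSemidef) (hsum : ∑ g, E g = 1) :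
    bb84Guesswork ≤ (∑ g, (bb84R g * E g).trace).re := by
  refine ciInf_le ⟨0, ?_⟩
    (⟨E, hE, hsum⟩ : {E : Equiv.Perm (Fin 4) → Matrix (Fin 2) (Fin 2) ℂ //
      (∀ g, (E g).PosSemidef) ∧ ∑ g, E g = 1})
  rintro _ ⟨F, rfl⟩
  dsimp only
  rw [Complex.re_sum]
  exact Finset.sum_nonneg fun g _ =>
    (Complex.nonneg_iff.1 ((bb84R_posSemidef g).trace_mul_nonneg (F.2.1 g))).1

theorem bb84Guesswork_le_of_add_eq_one (g₁ g₂ : Equiv.Perm (Fin 4))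
    {P Q : Matrix (Fin 2) (Fin 2) ℂ} (hP : P.PosSemidef) (hQ : Q.PosSemidef) (hPQ : P + Q = 1) :
    bb84Guesswork ≤ ((bb84R g₁ * P).trace + (bb84R g₂ * Q).trace).re := by
  set E : Equiv.Perm (Fin 4) → Matrix (Fin 2) (Fin 2) ℂ := Pi.single g₁ P + Pi.single g₂ Q
  have hE : ∀ g, (E g).PosSemidef := fun g => by
    simp only [E, Pi.add_apply, Pi.single_apply]
    split_ifs <;> simp [hP, hQ, hP.add hQ, PosSemidef.zero]
  convert bb84Guesswork_le hE _ using 2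
  · simp only [E, Pi.add_apply, mul_add, trace_add, Finset.sum_add_distrib, Pi.single_apply,
      mul_ite, mul_zero, apply_ite trace, trace_zero, Finset.sum_ite_eq', Finset.mem_univ, if_true]
  · simp [E, Finset.sum_add_distrib, hPQ]

theorem bb84Proj_zero : bb84Proj 0 = !![1, 0; 0, 0] := by
  ext i j; fin_cases i <;> fin_cases j <;> simp [bb84Proj, bb84, vecMulVec_apply]

theorem bb84Proj_one : bb84Proj 1 = !![0, 0; 0, 1] := by
  ext i j; fin_cases i <;> fin_cases j <;> simp [bb84Proj, bb84, vecMulVec_apply]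

theorem bb84Proj_two : bb84Proj 2 = !![1/2, 1/2; 1/2, 1/2] := by
  ext i j; fin_cases i <;> fin_cases j <;>
    simp [bb84Proj, bb84, vecMulVec_apply, Complex.ofReal_sqrt_two_inv_mul_self]

theorem bb84Proj_three : bb84Proj 3 = !![1/2, -1/2; -1/2, 1/2] := by
  ext i j; fin_cases i <;> fin_cases j <;>
    simp [bb84Proj, bb84, vecMulVec_apply, Complex.ofReal_sqrt_two_inv_mul_self, neg_div]

theorem bb84R_orderA : bb84R bb84OrderA = !![13/8, -1/8; -1/8, 7/8] := by
  simp only [bb84R, bb84OrderA, Equiv.symm_mk, Equiv.coe_fn_mk, Fin.sum_univ_four,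
    bb84Proj_zero, bb84Proj_one, bb84Proj_two, bb84Proj_three, Fin.isValue, cons_val]
  ext i j; fin_cases i <;> fin_cases j <;> norm_num

theorem bb84R_orderB : bb84R bb84OrderB = !![7/8, 1/8; 1/8, 13/8] := by
  simp only [bb84R, bb84OrderB, Equiv.symm_mk, Equiv.coe_fn_mk, Fin.sum_univ_four,
    bb84Proj_zero, bb84Proj_one, bb84Proj_two, bb84Proj_three, Fin.isValue, cons_val]
  ext i j; fin_cases i <;> fin_cases j <;> norm_num

theorem vecMulVec_thetaVec_add_thetaVecPerp (θ : ℝ) :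
    vecMulVec (thetaVec θ) (star (thetaVec θ)) +
      vecMulVec (thetaVecPerp θ) (star (thetaVecPerp θ)) = 1 := by
  ext i j
  fin_cases i <;> fin_cases j <;>
    simp only [thetaVec, thetaVecPerp, Matrix.add_apply, vecMulVec_apply, Pi.star_apply,
      RCLike.star_def, Complex.conj_ofReal, cons_val_zero, cons_val_one, cons_val_fin_one,
      Fin.isValue, Fin.zero_eta, Fin.mk_one, star_neg, mul_neg, neg_neg, mul_comm, add_neg_cancel,
      one_apply_eq, one_apply_ne, ne_eq, zero_ne_one, one_ne_zero, not_false_eq_true] <;>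
    linear_combination Complex.ofReal_sin_sq_add_ofReal_cos_sq θ

theorem bb84_thetaMeasurement_expected_guesses (θ : ℝ) :
    (bb84R bb84OrderA * vecMulVec (thetaVec θ) (star (thetaVec θ))).trace +
        (bb84R bb84OrderB * vecMulVec (thetaVecPerp θ) (star (thetaVecPerp θ))).trace =
      ((1.75 + (3 / 2) * Real.sin θ ^ 2 - (1 / 4) * Real.sin (2 * θ) : ℝ) : ℂ) := by
  rw [bb84R_orderA, bb84R_orderB, Real.sin_two_mul]
  simp only [trace, diag_apply, mul_apply, of_apply, cons_val', cons_val_zero, cons_val_one,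
    cons_val_fin_one, Fin.sum_univ_two, Fin.isValue, vecMulVec_apply, Pi.star_apply,
    RCLike.star_def, Complex.conj_ofReal, thetaVec, thetaVecPerp, neg_mul, mul_neg, map_neg,
    neg_neg, Complex.ofReal_sub, Complex.ofReal_add, Complex.ofReal_mul, Complex.ofReal_div,
    Complex.ofReal_pow, Complex.ofReal_one, Complex.ofReal_ofNat, Complex.ofReal_ofScientific]
  linear_combination (7 / 4 : ℂ) * Complex.ofReal_sin_sq_add_ofReal_cos_sq θ

theorem guesses_eq_sub_cos_sin_two_mul (θ : ℝ) :
    1.75 + (3 / 2) * Real.sin θ ^ 2 - (1 / 4) * Real.sin (2 * θ) =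
      5 / 2 - (3 * Real.cos (2 * θ) + Real.sin (2 * θ)) / 4 := by
  rw [Real.cos_two_mul]
  linear_combination (3 / 2 : ℝ) * Real.sin_sq_add_cos_sq θ

/-- Guesswork of the BB84 ensemble: the projective measurement
`{|θ⟩⟨θ|, |θ^⊥⟩⟨θ^⊥|}` with guessing orders `(1,+,−,0)` and `(0,−,+,1)` has expected
number of guesses `1.75 + (3/2)sin²θ − (1/4)sin 2θ`, and consequently the guesswork
satisfies `G(X|B) ≤ (10 − √10)/4`, attained at `θ = (1/2) arctan(1/3)`. -/
theorem bb84_guesswork_upper_bound :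
    (∀ θ : ℝ,
      ((bb84R bb84OrderA * Matrix.vecMulVec (thetaVec θ) (star (thetaVec θ))).trace +
        (bb84R bb84OrderB *
          Matrix.vecMulVec (thetaVecPerp θ) (star (thetaVecPerp θ))).trace).re =
        1.75 + (3 / 2) * Real.sin θ ^ 2 - (1 / 4) * Real.sin (2 * θ)) ∧
    bb84Guesswork ≤ (10 - Real.sqrt 10) / 4 := by
  refine ⟨fun θ => by rw [bb84_thetaMeasurement_expected_guesses, Complex.ofReal_re], ?_⟩
  set θ := Real.arctan (1 / 3) / 2
  calc bb84Guesswork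
      ≤ ((bb84R bb84OrderA * vecMulVec (thetaVec θ) (star (thetaVec θ))).trace +
          (bb84R bb84OrderB * vecMulVec (thetaVecPerp θ) (star (thetaVecPerp θ))).trace).re :=
        bb84Guesswork_le_of_add_eq_one _ _ (posSemidef_vecMulVec_self_star _)
          (posSemidef_vecMulVec_self_star _) (vecMulVec_thetaVec_add_thetaVecPerp θ)
    _ = 5 / 2 - (3 * Real.cos (2 * θ) + 1 * Real.sin (2 * θ)) / 4 := by
        rw [bb84_thetaMeasurement_expected_guesses, Complex.ofReal_re,
          guesses_eq_sub_cos_sin_two_mul, one_mul]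
    _ = (10 - Real.sqrt 10) / 4 := by
        rw [show 2 * θ = Real.arctan (1 / 3) by ring,
          Real.mul_cos_arctan_add_mul_sin_arctan three_pos]
        norm_num
        ring
end
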